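/- Let J be the smallest j ∈ ℕ such that the reduced word X(−j, −1) = R(X_{−j} ⋯ X_{−1}) contains an H or a C. Then: (i) J is almost surely finite; (ii) X_{−J} ∈ {H, C}; (iii) the symbol X_{−J} has no match in X_{−J} ⋯ X_{−1}; and (iv) the reduced word X(−J, −1) consists only of H's and c's (if X_{−J} = H) or only of C's and h's (if X_{−J} = C). -/

import Mathlib

open scoped ENNReal NNReal

inductive BSym : Type
  | hb | cb | ho | co | db | eb | fo | so
deriving DecidableEq

instance : MeasurableSpace BSym := ⊤

abbrev Word := List BSym

def isBurger : BSym → Bool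
  | BSym.hb => true | BSym.cb => true | BSym.db => true | BSym.eb => true
  | _ => false

def isHC : BSym → Bool
  | BSym.hb => true | BSym.cb => true | _ => false

def rules : List (Word × Word) :=
  [([BSym.cb, BSym.co], []), ([BSym.hb, BSym.ho], []),
   ([BSym.cb, BSym.ho], [BSym.ho, BSym.cb]), ([BSym.hb, BSym.co], [BSym.co, BSym.hb]),
   ([BSym.hb, BSym.fo], []), ([BSym.cb, BSym.fo], []),
   ([BSym.hb, BSym.so], [BSym.hb, BSym.co]), ([BSym.cb, BSym.so], [BSym.cb, BSym.ho]),
   ([BSym.hb, BSym.db], [BSym.hb, BSym.hb]), ([BSym.cb, BSym.db], [BSym.cb, BSym.cb]),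
   ([BSym.hb, BSym.eb], [BSym.hb, BSym.cb]), ([BSym.cb, BSym.eb], [BSym.cb, BSym.hb])]

inductive Step : Word → Word → Prop
  | mk (u v l r : Word) (hlr : (l, r) ∈ rules) : Step (u ++ l ++ v) (u ++ r ++ v)

def WEquiv : Word → Word → Prop := Relation.EqvGen Step

def Reduced (x : Word) : Prop :=
  ∃ u v : Word, x = u ++ v ∧ (∀ a ∈ u, isHC a = false) ∧ ∀ a ∈ v, isHC a = true

def NB (x : Word) : ℕ := (x.filter isBurger).length
def NO (x : Word) : ℕ := (x.filter (fun a => !isBurger a)).length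
def netC (x : Word) : ℤ := (NB x : ℤ) - (NO x : ℤ)
def NHC (x : Word) : ℕ := (x.filter isHC).length
def NDS (x : Word) : ℕ := x.count BSym.db + x.count BSym.so
def discrep (x : Word) : ℤ :=
  ((x.count BSym.hb : ℤ) - (x.count BSym.ho : ℤ)) - ((x.count BSym.cb : ℤ) - (x.count BSym.co : ℤ))

def wnd {Ω : Type*} (X : ℤ → Ω → BSym) (ω : Ω) (a b : ℤ) : Word :=
  (List.range (b + 1 - a).toNat).map fun i => X (a + i) ω

def fwd {Ω : Type*} (X : ℕ → Ω → BSym) (ω : Ω) (n : ℕ) : Word :=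
  (List.range n).map fun i => X (i + 1) ω
open MeasureTheory ProbabilityTheory Filter

def lawPQ {Ω : Type*} [MeasurableSpace Ω] (p q : ℝ) (μ : Measure Ω) (Y : Ω → BSym) : Prop :=
  μ (Y ⁻¹' {BSym.ho}) = ENNReal.ofReal ((1 - p) / 4) ∧
  μ (Y ⁻¹' {BSym.co}) = ENNReal.ofReal ((1 - p) / 4) ∧
  μ (Y ⁻¹' {BSym.so}) = ENNReal.ofReal (p / 2) ∧
  μ (Y ⁻¹' {BSym.hb}) = ENNReal.ofReal ((1 - q) / 4) ∧
  μ (Y ⁻¹' {BSym.cb}) = ENNReal.ofReal ((1 - q) / 4) ∧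
  μ (Y ⁻¹' {BSym.db}) = ENNReal.ofReal (q / 2) ∧
  μ (Y ⁻¹' {BSym.fo}) = 0 ∧ μ (Y ⁻¹' {BSym.eb}) = 0
/-- The backward word `X_{-j} ⋯ X_{-1}`. -/
def bword {Ω : Type*} (X : ℤ → Ω → BSym) (ω : Ω) (j : ℕ) : Word :=
  wnd X ω (-(j : ℤ)) (-1)

/-- `J`: the smallest `j ≥ 1` such that the reduced word `X(-j,-1)` contains an `hb` or `cb`. -/
noncomputable def Jt {Ω : Type*} (X : ℤ → Ω → BSym) (R : Word → Word) (ω : Ω) : ℕ :=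
  sInf {j : ℕ | 0 < j ∧ 0 < NHC (R (bword X ω j))}
namespace JB

/-! ### Normal form machinery -/

def opp : BSym → BSym
  | BSym.hb => BSym.cb
  | BSym.cb => BSym.hb
  | _ => BSym.hb

def pushHo (p s : Word) : Word × Word :=
  if BSym.hb ∈ s then (p, s.erase BSym.hb) else (p ++ [BSym.ho], s)

def pushCo (p s : Word) : Word × Word :=
  if BSym.cb ∈ s then (p, s.erase BSym.cb) else (p ++ [BSym.co], s)

def push : Word × Word → BSym → Word × Word
  | (p, s), BSym.hb => (p, BSym.hb :: s)
  | (p, s), BSym.cb => (p, BSym.cb :: s)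
  | (p, s), BSym.ho => pushHo p s
  | (p, s), BSym.co => pushCo p s
  | (p, s), BSym.so => match s with
    | [] => (p ++ [BSym.so], [])
    | t :: r => if t = BSym.hb then pushCo p (t :: r) else pushHo p (t :: r)
  | (p, s), BSym.fo => match s with
    | [] => (p ++ [BSym.fo], [])
    | _ :: r => (p, r)
  | (p, s), BSym.db => match s with
    | [] => (p ++ [BSym.db], [])
    | t :: r => (p, t :: t :: r)
  | (p, s), BSym.eb => match s with
    | [] => (p ++ [BSym.eb], [])
    | t :: r => (p, opp t :: t :: r)

def nfAux (w : Word) (st : Word × Word) : Word × Word := w.foldl push st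

def nf (x : Word) : Word := (nfAux x ([], [])).1 ++ (nfAux x ([], [])).2.reverse

lemma nfAux_nil (st : Word × Word) : nfAux [] st = st := rfl

lemma nfAux_cons (a : BSym) (w : Word) (st : Word × Word) :
    nfAux (a :: w) st = nfAux w (push st a) := rfl

lemma nfAux_append (u v : Word) (st : Word × Word) :
    nfAux (u ++ v) st = nfAux v (nfAux u st) := List.foldl_append ..

/-- The stack part of `push` does not depend on the prefix part; the prefix part only grows,
by something independent of the prefix. -/
lemma push_pre (p s : Word) (a : BSym) :
    push (p, s) a = (p ++ (push ([], s) a).1, (push ([], s) a).2) := by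
  cases a <;> cases s <;> simp only [push, pushHo, pushCo] <;>
    first
      | (split_ifs <;> simp_all)
      | simp

lemma nfAux_pre (w : Word) (p s : Word) :
    nfAux w (p, s) = (p ++ (nfAux w ([], s)).1, (nfAux w ([], s)).2) := by
  induction w generalizing p s with
  | nil => simp [nfAux_nil]
  | cons a w ih =>
    rw [nfAux_cons, nfAux_cons, push_pre]
    rw [ih, ih (push ([], s) a).1]
    rcases h : push ([], s) a with ⟨p', s'⟩
    simp [List.append_assoc]

lemma nfAux_snd_pre (w : Word) (p p' s : Word) :
    (nfAux w (p, s)).2 = (nfAux w (p', s)).2 := by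
  rw [nfAux_pre w p, nfAux_pre w p']

/-- The 12 rules are respected by the stack automaton. -/
lemma nfAux_rules (pr : Word × Word) (hpr : pr ∈ rules) (st : Word × Word) :
    nfAux pr.1 st = nfAux pr.2 st := by
  obtain ⟨p, s⟩ := st
  fin_cases hpr <;>
    simp only [nfAux, List.foldl, push, pushHo, pushCo, opp] <;>
    first
      | rfl
      | ((by_cases h : BSym.hb ∈ s <;> simp [h, List.erase_cons]); done)
      | ((by_cases h : BSym.cb ∈ s <;> simp [h, List.erase_cons]); done)
      | simp [List.erase_cons]

lemma step_nfAux {a b : Word} (h : Step a b) (st : Word × Word) :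
    nfAux a st = nfAux b st := by
  obtain ⟨u, v, l, r, hlr⟩ := h
  rw [nfAux_append, nfAux_append, nfAux_append, nfAux_append, nfAux_rules (l, r) hlr]

lemma wequiv_nf {a b : Word} (h : WEquiv a b) : nf a = nf b := by
  induction h with
  | rel x y hxy => unfold nf; rw [step_nfAux hxy]
  | refl x => rfl
  | symm x y _ ih => exact ih.symm
  | trans x y z _ _ ih1 ih2 => exact ih1.trans ih2

lemma nfAux_nonHC (u : Word) (hu : ∀ a ∈ u, isHC a = false) (p : Word) :
    nfAux u (p, []) = (p ++ u, []) := by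
  induction u generalizing p with
  | nil => simp [nfAux_nil]
  | cons a w ih =>
    have ha : isHC a = false := hu a (by simp)
    have hw : ∀ b ∈ w, isHC b = false := fun b hb => hu b (by simp [hb])
    rw [nfAux_cons]
    have : push (p, []) a = (p ++ [a], []) := by
      cases a <;> simp_all [push, pushHo, pushCo, isHC]
    rw [this, ih hw]
    simp

lemma nfAux_HC (v : Word) (hv : ∀ a ∈ v, isHC a = true) (p s : Word) :
    nfAux v (p, s) = (p, v.reverse ++ s) := by
  induction v generalizing s with
  | nil => simp [nfAux_nil]
  | cons a w ih =>
    have ha : isHC a = true := hv a (by simp)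
    have hw : ∀ b ∈ w, isHC b = true := fun b hb => hv b (by simp [hb])
    rw [nfAux_cons]
    have : push (p, s) a = (p, a :: s) := by
      cases a <;> simp_all [push, isHC]
    rw [this, ih hw]
    simp

lemma reduced_nf {z : Word} (hz : Reduced z) : nf z = z := by
  obtain ⟨u, v, rfl, hu, hv⟩ := hz
  unfold nf
  rw [nfAux_append, nfAux_nonHC u hu, nfAux_HC v hv]
  simp

/-- The reduction `R` is forced to coincide with the stack normal form. -/
lemma R_eq_nf (R : Word → Word) (hR : ∀ x : Word, Reduced (R x) ∧ WEquiv x (R x)) (x : Word) :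
    R x = nf x := by
  obtain ⟨h1, h2⟩ := hR x
  rw [← reduced_nf h1, wequiv_nf h2]

/-! ### Invariants -/

def eta (a : BSym) : ℤ := if isBurger a then 1 else -1

lemma netC_nil : netC [] = 0 := rfl

lemma netC_cons (a : BSym) (w : Word) : netC (a :: w) = eta a + netC w := by
  simp only [netC, NB, NO, eta, List.filter]
  cases h : isBurger a <;> simp [h] <;> ring

lemma netC_append (u v : Word) : netC (u ++ v) = netC u + netC v := by
  induction u with
  | nil => simp [netC_nil]
  | cons a w ih => simp [netC_cons, ih]; ring

lemma opp_HC (a : BSym) : isHC (opp a) = true := by cases a <;> rfl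

lemma opp_or (t : BSym) : opp t = BSym.hb ∨ opp t = BSym.cb := by
  cases t <;> simp [opp]

lemma push_snd_mem (p s : Word) (x a : BSym) (ha : a ∈ (push (p, s) x).2) :
    a ∈ s ∨ a = BSym.hb ∨ a = BSym.cb := by
  cases x
  case hb => simp only [push, List.mem_cons] at ha; tauto
  case cb => simp only [push, List.mem_cons] at ha; tauto
  case ho =>
    simp only [push, pushHo] at ha
    split_ifs at ha
    · exact Or.inl (List.mem_of_mem_erase ha)
    · exact Or.inl ha
  case co =>
    simp only [push, pushCo] at ha
    split_ifs at ha
    · exact Or.inl (List.mem_of_mem_erase ha)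
    · exact Or.inl ha
  case so =>
    cases s with
    | nil => simp [push] at ha
    | cons t r =>
      simp only [push] at ha
      split_ifs at ha
      · simp only [pushCo] at ha
        split_ifs at ha
        · exact Or.inl (List.mem_of_mem_erase ha)
        · exact Or.inl ha
      · simp only [pushHo] at ha
        split_ifs at ha
        · exact Or.inl (List.mem_of_mem_erase ha)
        · exact Or.inl ha
  case fo =>
    cases s with
    | nil => simp [push] at ha
    | cons t r => simp only [push] at ha; exact Or.inl (List.mem_cons_of_mem t ha)
  case db =>
    cases s with
    | nil => simp [push] at ha
    | cons t r =>
      simp only [push, List.mem_cons] at ha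
      rcases ha with rfl | rfl | ha
      · exact Or.inl (by simp)
      · exact Or.inl (by simp)
      · exact Or.inl (by simp [ha])
  case eb =>
    cases s with
    | nil => simp [push] at ha
    | cons t r =>
      simp only [push, List.mem_cons] at ha
      rcases ha with rfl | rfl | ha
      · right; exact opp_or t
      · exact Or.inl (by simp)
      · exact Or.inl (by simp [ha])

lemma push_snd_HC {s : Word} (hs : ∀ a ∈ s, isHC a = true) (p : Word) (x : BSym) :
    ∀ a ∈ (push (p, s) x).2, isHC a = true := by
  intro a ha
  rcases push_snd_mem p s x a ha with h | rfl | rfl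
  · exact hs a h
  · rfl
  · rfl

lemma nfAux_snd_HC (w : Word) : ∀ (p s : Word), (∀ a ∈ s, isHC a = true) →
    ∀ a ∈ (nfAux w (p, s)).2, isHC a = true := by
  induction w with
  | nil => intro p s hs; exact hs
  | cons x w ih =>
    intro p s hs
    rw [nfAux_cons]
    rcases h : push (p, s) x with ⟨p', s'⟩
    have : ∀ a ∈ s', isHC a = true := by
      have := push_snd_HC hs p x; rw [h] at this; exact this
    exact ih p' s' this

lemma pushHo_fst_mem (p s : Word) (a : BSym) (ha : a ∈ (pushHo p s).1) :
    a ∈ p ∨ a = BSym.ho := by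
  unfold pushHo at ha
  split_ifs at ha
  · exact Or.inl ha
  · simp only [List.mem_append, List.mem_singleton] at ha; exact ha

lemma pushCo_fst_mem (p s : Word) (a : BSym) (ha : a ∈ (pushCo p s).1) :
    a ∈ p ∨ a = BSym.co := by
  unfold pushCo at ha
  split_ifs at ha
  · exact Or.inl ha
  · simp only [List.mem_append, List.mem_singleton] at ha; exact ha

lemma push_fst_nonHC (p s : Word) (x : BSym) :
    ∀ a ∈ (push (p, s) x).1, a ∈ p ∨ isHC a = false := by
  intro a ha
  cases x
  case hb => exact Or.inl ha
  case cb => exact Or.inl ha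
  case ho =>
    rcases pushHo_fst_mem p s a ha with h | rfl
    · exact Or.inl h
    · exact Or.inr rfl
  case co =>
    rcases pushCo_fst_mem p s a ha with h | rfl
    · exact Or.inl h
    · exact Or.inr rfl
  case so =>
    cases s with
    | nil =>
      simp only [push, List.mem_append, List.mem_singleton] at ha
      rcases ha with h | rfl
      · exact Or.inl h
      · exact Or.inr rfl
    | cons t r =>
      simp only [push] at ha
      split_ifs at ha
      · rcases pushCo_fst_mem p (t :: r) a ha with h | rfl
        · exact Or.inl h
        · exact Or.inr rfl
      · rcases pushHo_fst_mem p (t :: r) a ha with h | rfl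
        · exact Or.inl h
        · exact Or.inr rfl
  case fo =>
    cases s with
    | nil =>
      simp only [push, List.mem_append, List.mem_singleton] at ha
      rcases ha with h | rfl
      · exact Or.inl h
      · exact Or.inr rfl
    | cons t r => exact Or.inl ha
  case db =>
    cases s with
    | nil =>
      simp only [push, List.mem_append, List.mem_singleton] at ha
      rcases ha with h | rfl
      · exact Or.inl h
      · exact Or.inr rfl
    | cons t r => exact Or.inl ha
  case eb =>
    cases s with
    | nil =>
      simp only [push, List.mem_append, List.mem_singleton] at ha
      rcases ha with h | rfl
      · exact Or.inl h
      · exact Or.inr rfl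
    | cons t r => exact Or.inl ha

lemma nfAux_fst_nonHC (w : Word) : ∀ (p s : Word), (∀ a ∈ p, isHC a = false) →
    ∀ a ∈ (nfAux w (p, s)).1, isHC a = false := by
  induction w with
  | nil => intro p s hp; exact hp
  | cons x w ih =>
    intro p s hp
    rw [nfAux_cons]
    rcases h : push (p, s) x with ⟨p', s'⟩
    have : ∀ a ∈ p', isHC a = false := by
      intro a ha
      have := push_fst_nonHC p s x; rw [h] at this
      rcases this a ha with h' | h'
      · exact hp a h'
      · exact h'
    exact ih p' s' this

lemma NHC_nf (w : Word) : NHC (nf w) = (nfAux w ([], [])).2.length := by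
  unfold nf NHC
  rw [List.filter_append]
  have h1 : (nfAux w ([], [])).1.filter isHC = [] := by
    rw [List.filter_eq_nil_iff]
    intro a ha
    have := nfAux_fst_nonHC w ([] : Word) ([] : Word) (by simp) a ha
    simp [this]
  have h2 : (nfAux w ([], [])).2.reverse.filter isHC = (nfAux w ([], [])).2.reverse := by
    rw [List.filter_eq_self]
    intro a ha
    exact nfAux_snd_HC w ([] : Word) ([] : Word) (by simp) a (List.mem_reverse.1 ha)
  rw [h1, h2]
  simp

/-! ### Stack length lower bound (criterion for a nonempty stack) -/

lemma len_erase_ge (b : BSym) (l : List BSym) :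
    (l.length : ℤ) - 1 ≤ ((l.erase b).length : ℤ) := by
  by_cases h : b ∈ l
  · rw [List.length_erase_of_mem h]
    have : 1 ≤ l.length := List.length_pos_iff.2 (List.ne_nil_of_mem h)
    omega
  · rw [List.erase_of_not_mem h]; omega

lemma pushHo_snd_len (p s : Word) : (s.length : ℤ) - 1 ≤ ((pushHo p s).2.length : ℤ) := by
  unfold pushHo
  split_ifs with h
  · simpa using len_erase_ge BSym.hb s
  · simp

lemma pushCo_snd_len (p s : Word) : (s.length : ℤ) - 1 ≤ ((pushCo p s).2.length : ℤ) := by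
  unfold pushCo
  split_ifs with h
  · simpa using len_erase_ge BSym.cb s
  · simp

lemma push_snd_len (p s : Word) (a : BSym) (hs : s ≠ []) :
    (s.length : ℤ) + eta a ≤ ((push (p, s) a).2.length : ℤ) := by
  obtain ⟨t, r, rfl⟩ : ∃ t r, s = t :: r := by
    cases s
    · simp at hs
    · exact ⟨_, _, rfl⟩
  cases a
  case hb => simp [push, eta, isBurger]
  case cb => simp [push, eta, isBurger]
  case ho =>
    have h1 := pushHo_snd_len p (t :: r)
    have he : eta BSym.ho = (-1 : ℤ) := rfl
    simp only [push, he]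
    omega
  case co =>
    have h1 := pushCo_snd_len p (t :: r)
    have he : eta BSym.co = (-1 : ℤ) := rfl
    simp only [push, he]
    omega
  case so =>
    have h1 := pushCo_snd_len p (t :: r)
    have h2 := pushHo_snd_len p (t :: r)
    have he : eta BSym.so = (-1 : ℤ) := rfl
    simp only [push, he]
    split_ifs with h
    · omega
    · omega
  case fo =>
    have he : eta BSym.fo = (-1 : ℤ) := rfl
    simp only [push, he, List.length_cons]
    push_cast
    omega
  case db =>
    have he : eta BSym.db = (1 : ℤ) := rfl
    simp only [push, he, List.length_cons]
    push_cast
    omega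
  case eb =>
    have he : eta BSym.eb = (1 : ℤ) := rfl
    simp only [push, he, List.length_cons]
    push_cast
    omega

lemma stack_lb (v : Word) : ∀ (p s : Word),
    (∀ t, t ≤ v.length → 1 ≤ (s.length : ℤ) + netC (v.take t)) →
    (s.length : ℤ) + netC v ≤ ((nfAux v (p, s)).2.length : ℤ) := by
  induction v with
  | nil => intro p s _; simp [nfAux_nil, netC_nil]
  | cons a v ih =>
    intro p s hyp
    have h0 : 1 ≤ (s.length : ℤ) := by
      have := hyp 0 (by omega); simpa [netC_nil] using this
    have hs : s ≠ [] := by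
      intro h; rw [h] at h0; simp at h0
    have hlen : (s.length : ℤ) + eta a ≤ ((push (p, s) a).2.length : ℤ) :=
      push_snd_len p s a hs
    rcases hst : push (p, s) a with ⟨p', s'⟩
    rw [hst] at hlen; simp at hlen
    have hyp' : ∀ t, t ≤ v.length → 1 ≤ (s'.length : ℤ) + netC (v.take t) := by
      intro t ht
      have := hyp (t + 1) (by simp; omega)
      rw [List.take_succ_cons, netC_cons] at this
      omega
    have := ih p' s' hyp'
    rw [nfAux_cons, hst, netC_cons]
    omega

lemma stack_nonempty_of_ladder (x : BSym) (hx : x = BSym.hb ∨ x = BSym.cb) (v : Word)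
    (hv : ∀ t, t ≤ v.length → 0 ≤ netC (v.take t)) :
    (nfAux (x :: v) ([], [])).2 ≠ [] := by
  have hpush : push ([], []) x = ([], [x]) := by
    rcases hx with rfl | rfl <;> rfl
  rw [nfAux_cons, hpush]
  have := stack_lb v ([] : Word) ([x]) (by
    intro t ht
    have := hv t ht
    simp
    omega)
  intro hcon
  rw [hcon] at this
  have h2 := hv v.length le_rfl
  rw [List.take_length] at h2
  simp at this
  omega

/-! ### Key structural lemma -/

def XYok (x y : BSym) : Prop :=
  (x = BSym.hb ∧ y = BSym.co) ∨ (x = BSym.cb ∧ y = BSym.ho)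

lemma exists_cons_of_ne_nil' {B : Word} (h : B ≠ []) : ∃ b B₀, B = b :: B₀ := by
  cases B
  · simp at h
  · exact ⟨_, _, rfl⟩

lemma pushHo_rel (x y : BSym) (hxy : XYok x y) (F B : Word) (hBne : B ≠ [])
    (hB : ∀ b ∈ B, b = x) :
    ∃ B', (∀ b ∈ B', b = x) ∧
      (pushHo ([] : Word) (F ++ B)).2 = (pushHo ([] : Word) F).2 ++ B' ∧
      ∀ a ∈ (pushHo ([] : Word) (F ++ B)).1, a = y := by
  by_cases h : BSym.hb ∈ F
  · have hmem : BSym.hb ∈ F ++ B := List.mem_append_left _ h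
    refine ⟨B, hB, ?_, ?_⟩
    · simp only [pushHo, if_pos h, if_pos hmem]
      exact List.erase_append_left _ h
    · simp only [pushHo, if_pos hmem]
      intro a ha
      simp at ha
  · rcases hxy with ⟨hx, hy⟩ | ⟨hx, hy⟩
    · subst hx hy
      obtain ⟨b, B₀, rfl⟩ := exists_cons_of_ne_nil' hBne
      have hb1 : b = BSym.hb := hB _ (by simp)
      subst hb1
      have hmem : BSym.hb ∈ F ++ BSym.hb :: B₀ := by simp
      refine ⟨B₀, fun c hc => hB _ (by simp [hc]), ?_, ?_⟩
      · simp only [pushHo, if_pos hmem, if_neg h]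
        rw [List.erase_append_right _ h]
        simp
      · simp only [pushHo, if_pos hmem]
        intro a ha
        simp at ha
    · subst hx hy
      have hmem : BSym.hb ∉ F ++ B := by
        simp only [List.mem_append]
        rintro (h' | h')
        · exact h h'
        · have := hB _ h'
          simp at this
      refine ⟨B, hB, ?_, ?_⟩
      · simp only [pushHo, if_neg hmem, if_neg h]
      · simp only [pushHo, if_neg hmem]
        intro a ha
        simp at ha
        simp [ha]

lemma pushCo_rel (x y : BSym) (hxy : XYok x y) (F B : Word) (hBne : B ≠ [])
    (hB : ∀ b ∈ B, b = x) :
    ∃ B', (∀ b ∈ B', b = x) ∧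
      (pushCo ([] : Word) (F ++ B)).2 = (pushCo ([] : Word) F).2 ++ B' ∧
      ∀ a ∈ (pushCo ([] : Word) (F ++ B)).1, a = y := by
  by_cases h : BSym.cb ∈ F
  · have hmem : BSym.cb ∈ F ++ B := List.mem_append_left _ h
    refine ⟨B, hB, ?_, ?_⟩
    · simp only [pushCo, if_pos h, if_pos hmem]
      exact List.erase_append_left _ h
    · simp only [pushCo, if_pos hmem]
      intro a ha
      simp at ha
  · rcases hxy with ⟨hx, hy⟩ | ⟨hx, hy⟩
    · subst hx hy
      have hmem : BSym.cb ∉ F ++ B := by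
        simp only [List.mem_append]
        rintro (h' | h')
        · exact h h'
        · have := hB _ h'
          simp at this
      refine ⟨B, hB, ?_, ?_⟩
      · simp only [pushCo, if_neg hmem, if_neg h]
      · simp only [pushCo, if_neg hmem]
        intro a ha
        simp at ha
        simp [ha]
    · subst hx hy
      obtain ⟨b, B₀, rfl⟩ := exists_cons_of_ne_nil' hBne
      have hb1 : b = BSym.cb := hB _ (by simp)
      subst hb1
      have hmem : BSym.cb ∈ F ++ BSym.cb :: B₀ := by simp
      refine ⟨B₀, fun c hc => hB _ (by simp [hc]), ?_, ?_⟩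
      · simp only [pushCo, if_pos hmem, if_neg h]
        rw [List.erase_append_right _ h]
        simp
      · simp only [pushCo, if_pos hmem]
        intro a ha
        simp at ha

lemma push_rel (x y : BSym) (hxy : XYok x y) (s : BSym) (hs : s ≠ BSym.eb) (F B : Word)
    (hBne : B ≠ []) (hB : ∀ b ∈ B, b = x) :
    ∃ B', (∀ b ∈ B', b = x) ∧
      (push (([] : Word), F ++ B) s).2 = (push (([] : Word), F) s).2 ++ B' ∧
      ∀ a ∈ (push (([] : Word), F ++ B) s).1, a = y := by
  have hxne : x ≠ BSym.hb ∨ x ≠ BSym.cb := by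
    rcases hxy with ⟨rfl, _⟩ | ⟨rfl, _⟩ <;> simp
  cases s
  case hb =>
    refine ⟨B, hB, by simp [push], by simp [push]⟩
  case cb =>
    refine ⟨B, hB, by simp [push], by simp [push]⟩
  case ho => exact pushHo_rel x y hxy F B hBne hB
  case co => exact pushCo_rel x y hxy F B hBne hB
  case so =>
    cases F with
    | nil =>
      obtain ⟨b, B₀, rfl⟩ := exists_cons_of_ne_nil' hBne
      have hb1 : b = x := hB _ (by simp)
      subst hb1
      rcases hxy with ⟨hx, hy⟩ | ⟨hx, hy⟩ <;> subst hx hy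
      · have hnc : BSym.cb ∉ (BSym.hb :: B₀ : Word) := by
          intro hc
          have := hB _ hc
          simp at this
        refine ⟨BSym.hb :: B₀, hB, ?_, ?_⟩
        · simp [push, pushCo, hnc]
        · simp [push, pushCo, hnc]
      · have hnh : BSym.hb ∉ (BSym.cb :: B₀ : Word) := by
          intro hc
          have := hB _ hc
          simp at this
        refine ⟨BSym.cb :: B₀, hB, ?_, ?_⟩
        · simp [push, pushHo, hnh]
        · simp [push, pushHo, hnh]
    | cons f F₀ =>
      by_cases hf : f = BSym.hb
      · subst hf
        have h1 := pushCo_rel x y hxy (BSym.hb :: F₀) B hBne hB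
        simpa only [push, List.cons_append, if_pos rfl, if_true] using h1
      · have h1 := pushHo_rel x y hxy (f :: F₀) B hBne hB
        simpa only [push, List.cons_append, if_neg hf] using h1
  case fo =>
    cases F with
    | nil =>
      obtain ⟨b, B₀, rfl⟩ := exists_cons_of_ne_nil' hBne
      refine ⟨B₀, fun c hc => hB _ (by simp [hc]), ?_, ?_⟩
      · simp [push]
      · simp [push]
    | cons f F₀ =>
      refine ⟨B, hB, ?_, ?_⟩
      · simp [push]
      · simp [push]
  case db =>
    cases F with
    | nil =>
      obtain ⟨b, B₀, rfl⟩ := exists_cons_of_ne_nil' hBne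
      have hb1 : b = x := hB _ (by simp)
      refine ⟨b :: b :: B₀, ?_, ?_, ?_⟩
      · intro c hc
        simp only [List.mem_cons] at hc
        rcases hc with rfl | rfl | hc
        · exact hb1
        · exact hb1
        · exact hB _ (by simp [hc])
      · simp [push]
      · simp [push]
    | cons f F₀ =>
      refine ⟨B, hB, ?_, ?_⟩
      · simp [push]
      · simp [push]
  case eb => exact absurd rfl hs

lemma key (x y : BSym) : ∀ (u : Word), (∀ a ∈ u, a ≠ BSym.eb) →
    ∀ (F B : Word), B ≠ [] → (∀ b ∈ B, b = x) → XYok x y →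
    (nfAux u (([] : Word), F ++ B)).2 = (nfAux u (([] : Word), F)).2
    ∨ ∃ B', B' ≠ [] ∧ (∀ b ∈ B', b = x) ∧
        (nfAux u (([] : Word), F ++ B)).2 = (nfAux u (([] : Word), F)).2 ++ B' ∧
        ∀ a ∈ (nfAux u (([] : Word), F ++ B)).1, a = y := by
  intro u
  induction u with
  | nil =>
    intro _ F B hBne hB hxy
    right
    exact ⟨B, hBne, hB, rfl, by simp [nfAux_nil]⟩
  | cons s u ih =>
    intro hu F B hBne hB hxy
    have hs : s ≠ BSym.eb := hu s (by simp)
    obtain ⟨B', hB'x, hstk, hpre⟩ := push_rel x y hxy s hs F B hBne hB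
    by_cases hB' : B' = []
    · left
      subst hB'
      rw [List.append_nil] at hstk
      rw [nfAux_cons, nfAux_cons]
      rcases hc : push (([] : Word), F ++ B) s with ⟨pc, sc⟩
      rcases hf : push (([] : Word), F) s with ⟨pf, sf⟩
      rw [hc, hf] at hstk
      simp only [] at hstk
      calc (nfAux u (pc, sc)).2 = (nfAux u (([] : Word), sc)).2 := nfAux_snd_pre u pc ([] : Word) sc
        _ = (nfAux u (([] : Word), sf)).2 := by rw [hstk]
        _ = (nfAux u (pf, sf)).2 := (nfAux_snd_pre u pf ([] : Word) sf).symm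
    · rcases ih (fun a ha => hu a (by simp [ha])) (push (([] : Word), F) s).2 B' hB' hB'x hxy with
        hmerge | ⟨B'', hne, hBx'', hstk2, hpre2⟩
      · left
        rw [nfAux_cons, nfAux_cons]
        rcases hc : push (([] : Word), F ++ B) s with ⟨pc, sc⟩
        rcases hf : push (([] : Word), F) s with ⟨pf, sf⟩
        rw [hc, hf] at hstk
        rw [hf] at hmerge
        simp only [] at hstk hmerge
        calc (nfAux u (pc, sc)).2 = (nfAux u (([] : Word), sf ++ B')).2 := by
              rw [← hstk]; exact nfAux_snd_pre u pc ([] : Word) sc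
          _ = (nfAux u (([] : Word), sf)).2 := hmerge
          _ = (nfAux u (pf, sf)).2 := (nfAux_snd_pre u pf ([] : Word) sf).symm
      · right
        refine ⟨B'', hne, hBx'', ?_, ?_⟩
        · rw [nfAux_cons, nfAux_cons]
          rcases hc : push (([] : Word), F ++ B) s with ⟨pc, sc⟩
          rcases hf : push (([] : Word), F) s with ⟨pf, sf⟩
          rw [hc, hf] at hstk
          rw [hf] at hstk2
          simp only [] at hstk hstk2
          calc (nfAux u (pc, sc)).2 = (nfAux u (([] : Word), sf ++ B')).2 := by
                rw [← hstk]; exact nfAux_snd_pre u pc ([] : Word) sc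
            _ = (nfAux u (([] : Word), sf)).2 ++ B'' := hstk2
            _ = (nfAux u (pf, sf)).2 ++ B'' := by
                rw [nfAux_snd_pre u pf ([] : Word) sf]
        · rw [nfAux_cons]
          rcases hc : push (([] : Word), F ++ B) s with ⟨pc, sc⟩
          rw [hc] at hstk hpre
          simp only [] at hstk hpre
          intro a ha
          rw [nfAux_pre] at ha
          simp only [List.mem_append] at ha
          rcases ha with ha | ha
          · exact hpre a ha
          · rw [hstk] at ha
            exact hpre2 a ha

/-! ### Windows -/

lemma bword_eq {Ω : Type*} (X : ℤ → Ω → BSym) (ω : Ω) (j : ℕ) :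
    bword X ω j = (List.range j).map (fun i : ℕ => X (-(j : ℤ) + (i : ℤ)) ω) := by
  unfold bword wnd
  have h : (-1 + 1 - -(j : ℤ)).toNat = j := by omega
  rw [h]
  have hfm : ∀ (l : List ℕ), (l.flatMap fun a : ℕ => [(a : ℤ)]) = l.map (fun a : ℕ => (a : ℤ)) := by
    intro l
    induction l with
    | nil => rfl
    | cons a l ih => simp [ih]
  show List.map _ ((List.range j).flatMap fun a => [((a : ℕ) : ℤ)]) = _
  rw [hfm, List.map_map]
  rfl

lemma bword_zero {Ω : Type*} (X : ℤ → Ω → BSym) (ω : Ω) : bword X ω 0 = [] := by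
  simp [bword_eq]

lemma bword_length {Ω : Type*} (X : ℤ → Ω → BSym) (ω : Ω) (j : ℕ) :
    (bword X ω j).length = j := by
  simp [bword_eq]

lemma bword_succ {Ω : Type*} (X : ℤ → Ω → BSym) (ω : Ω) (j : ℕ) :
    bword X ω (j + 1) = X (-(j : ℤ) - 1) ω :: bword X ω j := by
  rw [bword_eq, bword_eq, List.range_succ_eq_map, List.map_cons, List.map_map]
  congr 1
  · congr 1
    push_cast
    ring
  · apply List.map_congr_left
    intro i _
    simp only [Function.comp_apply]
    congr 1
    push_cast
    ring

lemma bword_drop {Ω : Type*} (X : ℤ → Ω → BSym) (ω : Ω) :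
    ∀ (t j : ℕ), t ≤ j → (bword X ω j).drop t = bword X ω (j - t) := by
  intro t
  induction t with
  | zero => intro j _; simp
  | succ t ih =>
    intro j hj
    obtain ⟨j', rfl⟩ : ∃ j', j = j' + 1 := ⟨j - 1, by omega⟩
    rw [bword_succ, List.drop_succ_cons, ih j' (by omega)]
    congr 1
    omega

/-- The walk `U_m = netC (X(-m,-1))`. -/
def Uw {Ω : Type*} (X : ℤ → Ω → BSym) (ω : Ω) (m : ℕ) : ℤ := netC (bword X ω m)

lemma Uw_zero {Ω : Type*} (X : ℤ → Ω → BSym) (ω : Ω) : Uw X ω 0 = 0 := by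
  simp [Uw, bword_zero, netC_nil]

lemma Uw_succ {Ω : Type*} (X : ℤ → Ω → BSym) (ω : Ω) (m : ℕ) :
    Uw X ω (m + 1) = eta (X (-(m : ℤ) - 1) ω) + Uw X ω m := by
  rw [Uw, bword_succ, netC_cons]
  rfl

/-- Criterion: a weak ladder point whose symbol is `hb`/`cb` gives a window with
nonempty stack. -/
lemma window_stack_nonempty {Ω : Type*} (X : ℤ → Ω → BSym) (ω : Ω) (j : ℕ)
    (hx : X (-(j : ℤ) - 1) ω = BSym.hb ∨ X (-(j : ℤ) - 1) ω = BSym.cb)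
    (hlad : ∀ m ≤ j, Uw X ω m ≤ Uw X ω j) :
    (nfAux (bword X ω (j + 1)) (([] : Word), ([] : Word))).2 ≠ [] := by
  rw [bword_succ]
  apply stack_nonempty_of_ladder _ hx
  intro t ht
  rw [bword_length] at ht
  have hsplit : netC (bword X ω j) =
      netC ((bword X ω j).take t) + netC ((bword X ω j).drop t) := by
    rw [← netC_append, List.take_append_drop]
  rw [bword_drop X ω t j ht] at hsplit
  have h1 : Uw X ω (j - t) ≤ Uw X ω j := hlad _ (by omega)
  have : netC ((bword X ω j).take t) = Uw X ω j - Uw X ω (j - t) := by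
    unfold Uw at *
    omega
  omega

/-! ### The deterministic endgame -/

lemma push_empty_nonHC (pp : Word) (a : BSym) (ha : a ≠ BSym.hb) (hb : a ≠ BSym.cb) :
    push (pp, ([] : Word)) a = (pp ++ [a], ([] : Word)) := by
  cases a <;> simp_all [push, pushHo, pushCo]

lemma count_eq_len {x : BSym} {l : Word} (h : ∀ b ∈ l, b = x) : l.count x = l.length := by
  induction l with
  | nil => rfl
  | cons b l ih =>
    have hb : b = x := h b (by simp)
    subst hb
    rw [List.count_cons_self, ih fun c hc => h c (by simp [hc])]
    simp

theorem final_det {Ω : Type*} (X : ℤ → Ω → BSym) (ω : Ω)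
    (R : Word → Word) (hR : ∀ x : Word, Reduced (R x) ∧ WEquiv x (R x))
    (hC : ∃ j : ℕ, (X (-(j : ℤ) - 1) ω = BSym.hb ∨ X (-(j : ℤ) - 1) ω = BSym.cb) ∧
      ∀ m ≤ j, Uw X ω m ≤ Uw X ω j)
    (hE1 : ∀ i : ℤ, X i ω ≠ BSym.eb) :
    {j : ℕ | 0 < j ∧ 0 < NHC (R (bword X ω j))}.Nonempty ∧
      (X (-(Jt X R ω : ℤ)) ω = BSym.hb ∨ X (-(Jt X R ω : ℤ)) ω = BSym.cb) ∧
      0 < (R (bword X ω (Jt X R ω))).count (X (-(Jt X R ω : ℤ)) ω) ∧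
      (X (-(Jt X R ω : ℤ)) ω = BSym.hb →
        ∀ a ∈ R (bword X ω (Jt X R ω)), a = BSym.hb ∨ a = BSym.co) ∧
      (X (-(Jt X R ω : ℤ)) ω = BSym.cb →
        ∀ a ∈ R (bword X ω (Jt X R ω)), a = BSym.cb ∨ a = BSym.ho) := by
  have hRnf : ∀ w : Word, R w = nf w := R_eq_nf R hR
  -- nonemptiness
  obtain ⟨j, hx, hlad⟩ := hC
  have hne : {j : ℕ | 0 < j ∧ 0 < NHC (R (bword X ω j))}.Nonempty := by
    refine ⟨j + 1, by omega, ?_⟩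
    rw [hRnf, NHC_nf]
    have := window_stack_nonempty X ω j hx hlad
    exact List.length_pos_iff.2 this
  refine ⟨hne, ?_⟩
  -- facts about J
  have hJmem := Nat.sInf_mem hne
  obtain ⟨hJpos, hJNHC⟩ : 0 < Jt X R ω ∧ 0 < NHC (R (bword X ω (Jt X R ω))) := hJmem
  obtain ⟨J', hJ'⟩ : ∃ J', Jt X R ω = J' + 1 := ⟨Jt X R ω - 1, by omega⟩
  rw [hJ'] at hJNHC ⊢
  -- the previous window has empty stack
  have hprev : (nfAux (bword X ω J') (([] : Word), ([] : Word))).2 = [] := by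
    rcases Nat.eq_zero_or_pos J' with rfl | hJ'pos
    · rw [bword_zero]; rfl
    · have hlt : J' < Jt X R ω := by omega
      have hnotmem : J' ∉ {j : ℕ | 0 < j ∧ 0 < NHC (R (bword X ω j))} :=
        Nat.notMem_of_lt_sInf hlt
      simp only [Set.mem_setOf_eq, not_and, not_lt] at hnotmem
      have := hnotmem hJ'pos
      rw [hRnf, NHC_nf] at this
      exact List.length_eq_zero_iff.1 (by omega)
  have hcast : -((J' : ℤ) + 1) = -(J' : ℤ) - 1 := by ring
  have hword : bword X ω (J' + 1) = X (-(J' : ℤ) - 1) ω :: bword X ω J' :=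
    bword_succ X ω J'
  have hJstack : (nfAux (bword X ω (J' + 1)) (([] : Word), ([] : Word))).2 ≠ [] := by
    intro hcon
    rw [hRnf, NHC_nf, hcon] at hJNHC
    simp at hJNHC
  have hxJ : -(((J' + 1 : ℕ) : ℤ)) = -(J' : ℤ) - 1 := by push_cast; ring
  -- (ii)
  have hii : X (-(J' : ℤ) - 1) ω = BSym.hb ∨ X (-(J' : ℤ) - 1) ω = BSym.cb := by
    by_contra hcon
    push_neg at hcon
    apply hJstack
    rw [hword, nfAux_cons, push_empty_nonHC _ _ hcon.1 hcon.2]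
    rw [nfAux_snd_pre (bword X ω J') _ ([] : Word)]
    exact hprev
  set x := X (-(J' : ℤ) - 1) ω with hxdef
  -- key lemma application
  have hnoeb : ∀ a ∈ bword X ω J', a ≠ BSym.eb := by
    intro a ha
    rw [bword_eq] at ha
    simp only [List.mem_map] at ha
    obtain ⟨i, _, rfl⟩ := ha
    exact hE1 _
  have hxy : ∃ y, XYok x y ∧ (x = BSym.hb → y = BSym.co) ∧ (x = BSym.cb → y = BSym.ho) := by
    rcases hii with h | h
    · exact ⟨BSym.co, Or.inl ⟨h, rfl⟩, fun _ => rfl,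
        fun h2 => absurd (h.symm.trans h2) (by decide)⟩
    · exact ⟨BSym.ho, Or.inr ⟨h, rfl⟩,
        fun h2 => absurd (h.symm.trans h2) (by decide), fun _ => rfl⟩
  obtain ⟨y, hXY, hyh, hyc⟩ := hxy
  have hpushx : push (([] : Word), ([] : Word)) x = (([] : Word), [x]) := by
    rcases hii with h | h <;> rw [h] <;> rfl
  have hstate : nfAux (bword X ω (J' + 1)) (([] : Word), ([] : Word)) =
      nfAux (bword X ω J') (([] : Word), ([x] : Word)) := by
    rw [hword, nfAux_cons, hpushx]
  have hkey := key x y (bword X ω J') hnoeb ([] : Word) ([x] : Word) (by simp)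
      (by intro b hb; simpa using hb) hXY
  rcases hkey with hmerge | ⟨B', hB'ne, hB'x, hB'stk, hB'pre⟩
  · exfalso
    apply hJstack
    rw [hstate]
    simp only [List.nil_append] at hmerge
    rw [hmerge]
    exact hprev
  · simp only [List.nil_append] at hB'stk hB'pre
    rw [hprev, List.nil_append] at hB'stk
    -- the normal form of the J-window
    have hnf : nf (bword X ω (J' + 1)) =
        (nfAux (bword X ω J') (([] : Word), ([x] : Word))).1 ++ B'.reverse := by
      unfold nf
      rw [hstate, hB'stk]
    have hcount : 0 < (R (bword X ω (J' + 1))).count x := by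
      rw [hRnf, hnf, List.count_append]
      have h1 : B'.reverse.count x = B'.length := by
        rw [List.count_reverse, count_eq_len hB'x]
      have h2 : 0 < B'.length := List.length_pos_iff.2 hB'ne
      omega
    have hmem : ∀ a ∈ R (bword X ω (J' + 1)), a = x ∨ a = y := by
      intro a ha
      rw [hRnf, hnf, List.mem_append] at ha
      rcases ha with ha | ha
      · exact Or.inr (hB'pre a ha)
      · exact Or.inl (hB'x a (List.mem_reverse.1 ha))
    rw [hxJ, ← hxdef]
    refine ⟨hii, hcount, ?_, ?_⟩
    · intro hxh a ha
      rcases hmem a ha with rfl | rfl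
      · exact Or.inl hxh
      · exact Or.inr (hyh hxh)
    · intro hxc a ha
      rcases hmem a ha with rfl | rfl
      · exact Or.inl hxc
      · exact Or.inr (hyc hxc)

/-! ### The combinatorial sequence `cAux` (bound for the probability that a fair walk
stays below a level) and its convergence to `0`. -/

noncomputable def cAux : ℕ → ℤ → ℝ
  | 0, _ => 1
  | (m+1), K => if 1 ≤ K then (cAux m (K-1) + cAux m (K+1)) / 2 else cAux m (K+1) / 2

lemma cAux_zero (K : ℤ) : cAux 0 K = 1 := rfl

lemma cAux_succ (m : ℕ) (K : ℤ) :
    cAux (m+1) K = if 1 ≤ K then (cAux m (K-1) + cAux m (K+1)) / 2 else cAux m (K+1) / 2 := rfl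

lemma cAux_nonneg : ∀ (m : ℕ) (K : ℤ), 0 ≤ cAux m K := by
  intro m
  induction m with
  | zero => intro K; norm_num [cAux_zero]
  | succ m ih =>
    intro K
    rw [cAux_succ]
    split_ifs
    · have := ih (K-1); have := ih (K+1); positivity
    · have := ih (K+1); positivity

lemma cAux_le_one : ∀ (m : ℕ) (K : ℤ), cAux m K ≤ 1 := by
  intro m
  induction m with
  | zero => intro K; norm_num [cAux_zero]
  | succ m ih =>
    intro K
    rw [cAux_succ]
    split_ifs
    · have h1 := ih (K-1); have h2 := ih (K+1); linarith
    · have h2 := ih (K+1); have h0 := cAux_nonneg m (K+1); linarith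

lemma cAux_succ_le : ∀ (m : ℕ) (K : ℤ), cAux (m+1) K ≤ cAux m K := by
  intro m
  induction m with
  | zero =>
    intro K
    rw [cAux_zero]
    exact cAux_le_one 1 K
  | succ m ih =>
    intro K
    rw [cAux_succ (m+1) K, cAux_succ m K]
    split_ifs
    · have h1 := ih (K-1); have h2 := ih (K+1); linarith
    · have h2 := ih (K+1); linarith

lemma cAux_antitone (K : ℤ) : Antitone (fun m => cAux m K) :=
  antitone_nat_of_succ_le fun m => cAux_succ_le m K

noncomputable def ellc (K : ℤ) : ℝ := ⨅ m, cAux m K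

lemma cAux_tendsto (K : ℤ) : Filter.Tendsto (fun m => cAux m K) Filter.atTop (nhds (ellc K)) :=
  tendsto_atTop_ciInf (cAux_antitone K) ⟨0, by rintro r ⟨m, rfl⟩; exact cAux_nonneg m K⟩

lemma ellc_nonneg (K : ℤ) : 0 ≤ ellc K :=
  le_ciInf fun m => cAux_nonneg m K

lemma ellc_le_one (K : ℤ) : ellc K ≤ 1 :=
  ciInf_le_of_le ⟨0, by rintro r ⟨m, rfl⟩; exact cAux_nonneg m K⟩ 0 (by norm_num [cAux_zero])

lemma cAux_tendsto_succ (K : ℤ) :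
    Filter.Tendsto (fun m => cAux (m+1) K) Filter.atTop (nhds (ellc K)) :=
  (cAux_tendsto K).comp (Filter.tendsto_add_atTop_nat 1)

lemma ellc_rec_pos {K : ℤ} (hK : 1 ≤ K) : ellc K = (ellc (K-1) + ellc (K+1)) / 2 := by
  have h1 : Filter.Tendsto (fun m => cAux (m+1) K) Filter.atTop (nhds (ellc K)) :=
    cAux_tendsto_succ K
  have h2 : Filter.Tendsto (fun m => cAux (m+1) K) Filter.atTop
      (nhds ((ellc (K-1) + ellc (K+1)) / 2)) := by
    have he : (fun m => cAux (m+1) K) = fun m => (cAux m (K-1) + cAux m (K+1)) / 2 := by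
      funext m
      rw [cAux_succ, if_pos hK]
    rw [he]
    exact ((cAux_tendsto (K-1)).add (cAux_tendsto (K+1))).div_const 2
  exact tendsto_nhds_unique h1 h2

lemma ellc_rec_nonpos {K : ℤ} (hK : ¬ 1 ≤ K) : ellc K = ellc (K+1) / 2 := by
  have h1 : Filter.Tendsto (fun m => cAux (m+1) K) Filter.atTop (nhds (ellc K)) :=
    cAux_tendsto_succ K
  have h2 : Filter.Tendsto (fun m => cAux (m+1) K) Filter.atTop (nhds (ellc (K+1) / 2)) := by
    have he : (fun m => cAux (m+1) K) = fun m => cAux m (K+1) / 2 := by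
      funext m
      rw [cAux_succ, if_neg hK]
    rw [he]
    exact (cAux_tendsto (K+1)).div_const 2
  exact tendsto_nhds_unique h1 h2

lemma ellc_arith : ∀ n : ℕ, ellc ((n : ℤ) + 1) - ellc (n : ℤ) = ellc 1 - ellc 0 := by
  intro n
  induction n with
  | zero => norm_num
  | succ n ih =>
    have hrec := ellc_rec_pos (K := (n : ℤ) + 1) (by omega)
    have hn : ((n : ℤ) + 1 - 1) = (n : ℤ) := by ring
    rw [hn] at hrec
    push_cast
    linarith

lemma ellc_linear : ∀ n : ℕ, ellc (n : ℤ) = ellc 0 + n * (ellc 1 - ellc 0) := by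
  intro n
  induction n with
  | zero => simp
  | succ n ih =>
    have := ellc_arith n
    push_cast
    push_cast at ih
    linarith

lemma ellc_diff_zero : ellc 1 - ellc 0 = 0 := by
  by_contra hd
  rcases lt_or_gt_of_ne hd with hneg | hpos
  · obtain ⟨n, hn⟩ := exists_nat_gt ((ellc 0 + 1) / (-(ellc 1 - ellc 0)))
    have h1 := ellc_linear n
    have h2 := ellc_nonneg (n : ℤ)
    have h3 : (0:ℝ) < -(ellc 1 - ellc 0) := by linarith
    rw [div_lt_iff₀ h3] at hn
    nlinarith
  · obtain ⟨n, hn⟩ := exists_nat_gt ((1 - ellc 0 + 1) / (ellc 1 - ellc 0))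
    have h1 := ellc_linear n
    have h2 := ellc_le_one (n : ℤ)
    rw [div_lt_iff₀ (by linarith : (0:ℝ) < ellc 1 - ellc 0)] at hn
    nlinarith

lemma ellc_zero_eq : ellc 0 = 0 := by
  have h0 : ellc 0 = ellc 1 / 2 := by
    have := ellc_rec_nonpos (K := 0) (by omega)
    simpa using this
  have h1 : ellc 1 = ellc 0 := by
    have := ellc_diff_zero
    linarith
  rw [h1] at h0
  linarith

lemma ellc_eq_zero {K : ℤ} (hK : 0 ≤ K) : ellc K = 0 := by
  obtain ⟨n, rfl⟩ : ∃ n : ℕ, K = (n : ℤ) := ⟨K.toNat, by omega⟩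
  rw [ellc_linear n, ellc_diff_zero, ellc_zero_eq]
  ring

lemma cAux_tendsto_zero {K : ℤ} (hK : 0 ≤ K) :
    Filter.Tendsto (fun m => cAux m K) Filter.atTop (nhds 0) := by
  have := cAux_tendsto K
  rwa [ellc_eq_zero hK] at this

/-! ### The drawdown process, ladder counts -/

def updD (d : ℕ) (a : BSym) : ℕ := if isBurger a then d - 1 else d + 1

def Drel {Ω : Type*} (X : ℤ → Ω → BSym) : ℕ → ℕ → ℕ → Ω → ℕ
  | _, d, 0, _ => d
  | n, d, (t+1), ω => Drel X (n+1) (updD d (X (-(n : ℤ) - 1) ω)) t ω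

def Lcnt {Ω : Type*} (X : ℤ → Ω → BSym) : ℕ → ℕ → ℕ → Ω → ℕ
  | _, _, 0, _ => 0
  | n, d, (t+1), ω =>
      (if isBurger (X (-(n : ℤ) - 1) ω) = true ∧ d = 0 then 1 else 0) +
        Lcnt X (n+1) (updD d (X (-(n : ℤ) - 1) ω)) t ω

def NoGood {Ω : Type*} (X : ℤ → Ω → BSym) : ℕ → ℕ → ℕ → Ω → Prop
  | _, _, 0, _ => True
  | n, d, (t+1), ω =>
      (isBurger (X (-(n : ℤ) - 1) ω) = true ∧ d = 0 →
        X (-(n : ℤ) - 1) ω = BSym.db ∨ X (-(n : ℤ) - 1) ω = BSym.eb) ∧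
      NoGood X (n+1) (updD d (X (-(n : ℤ) - 1) ω)) t ω

variable {Ω : Type*} {X : ℤ → Ω → BSym} {ω : Ω}

lemma Drel_succ_right : ∀ (t n d : ℕ),
    Drel X n d (t+1) ω = updD (Drel X n d t ω) (X (-((n+t : ℕ) : ℤ) - 1) ω) := by
  intro t
  induction t with
  | zero =>
    intro n d
    simp [Drel]
  | succ t ih =>
    intro n d
    show Drel X (n+1) (updD d (X (-(n : ℤ) - 1) ω)) (t+1) ω = _
    rw [ih (n+1)]
    have : (((n+1) + t : ℕ) : ℤ) = ((n + (t+1) : ℕ) : ℤ) := by push_cast; ring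
    rw [this]
    rfl

lemma Lcnt_succ_right : ∀ (t n d : ℕ),
    Lcnt X n d (t+1) ω = Lcnt X n d t ω +
      (if isBurger (X (-((n+t : ℕ) : ℤ) - 1) ω) = true ∧ Drel X n d t ω = 0 then 1 else 0) := by
  intro t
  induction t with
  | zero =>
    intro n d
    simp [Lcnt, Drel]
  | succ t ih =>
    intro n d
    show (if isBurger (X (-(n : ℤ) - 1) ω) = true ∧ d = 0 then 1 else 0) +
        Lcnt X (n+1) (updD d (X (-(n : ℤ) - 1) ω)) (t+1) ω = _
    rw [ih (n+1)]
    have hc : (((n+1) + t : ℕ) : ℤ) = ((n + (t+1) : ℕ) : ℤ) := by push_cast; ring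
    rw [hc]
    show _ = (if isBurger (X (-(n : ℤ) - 1) ω) = true ∧ d = 0 then 1 else 0) +
        Lcnt X (n+1) (updD d (X (-(n : ℤ) - 1) ω)) t ω + _
    have hd : Drel X n d (t+1) ω = Drel X (n+1) (updD d (X (-(n : ℤ) - 1) ω)) t ω := rfl
    rw [hd]
    omega

lemma NoGood_succ_right : ∀ (t n d : ℕ),
    NoGood X n d (t+1) ω ↔ NoGood X n d t ω ∧
      ((isBurger (X (-((n+t : ℕ) : ℤ) - 1) ω) = true ∧ Drel X n d t ω = 0) →
        X (-((n+t : ℕ) : ℤ) - 1) ω = BSym.db ∨ X (-((n+t : ℕ) : ℤ) - 1) ω = BSym.eb) := by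
  intro t
  induction t with
  | zero =>
    intro n d
    show ((isBurger (X (-(n : ℤ) - 1) ω) = true ∧ d = 0 → _) ∧ True) ↔ _
    simp only [Drel, NoGood]
    have : ((n + 0 : ℕ) : ℤ) = (n : ℤ) := by push_cast; ring
    rw [this]
    tauto
  | succ t ih =>
    intro n d
    show ((isBurger (X (-(n : ℤ) - 1) ω) = true ∧ d = 0 → _) ∧
        NoGood X (n+1) (updD d (X (-(n : ℤ) - 1) ω)) (t+1) ω) ↔ _
    rw [ih (n+1)]
    have hc : (((n+1) + t : ℕ) : ℤ) = ((n + (t+1) : ℕ) : ℤ) := by push_cast; ring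
    rw [hc]
    have hd : Drel X n d (t+1) ω = Drel X (n+1) (updD d (X (-(n : ℤ) - 1) ω)) t ω := rfl
    rw [hd]
    show _ ↔ ((isBurger (X (-(n : ℤ) - 1) ω) = true ∧ d = 0 → _) ∧
        NoGood X (n+1) (updD d (X (-(n : ℤ) - 1) ω)) t ω) ∧ _
    tauto

lemma Lcnt_sub_Drel : ∀ j : ℕ, (Lcnt X 0 0 j ω : ℤ) - (Drel X 0 0 j ω : ℤ) = Uw X ω j := by
  intro j
  induction j with
  | zero => simp [Lcnt, Drel, Uw_zero]
  | succ j ih =>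
    rw [Lcnt_succ_right j 0 0, Drel_succ_right j 0 0, Uw_succ]
    have hz : ((0 + j : ℕ) : ℤ) = (j : ℤ) := by push_cast; ring
    rw [hz]
    set a := X (-(j : ℤ) - 1) ω with ha
    unfold updD eta
    by_cases hb : isBurger a = true
    · simp only [hb, if_true, if_pos]
      by_cases hd : Drel X 0 0 j ω = 0
      · simp [hd] at ih ⊢
        omega
      · simp only [hb, hd, and_false, if_false]
        push_cast
        omega
    · have hb' : isBurger a = false := by
        cases h : isBurger a
        · rfl
        · exact absurd h hb
      simp only [hb', hb]
      simp only [Bool.false_eq_true, if_false, false_and]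
      push_cast
      omega

lemma Drel_weak_ladder : ∀ j : ℕ, ∀ m ≤ j, Uw X ω m ≤ Uw X ω j + (Drel X 0 0 j ω : ℤ) := by
  intro j
  induction j with
  | zero =>
    intro m hm
    interval_cases m
    simp [Drel]
  | succ j ih =>
    intro m hm
    have hstep : Uw X ω j + (Drel X 0 0 j ω : ℤ) ≤
        Uw X ω (j+1) + (Drel X 0 0 (j+1) ω : ℤ) := by
      rw [Uw_succ, Drel_succ_right j 0 0]
      have hz : ((0 + j : ℕ) : ℤ) = (j : ℤ) := by push_cast; ring
      rw [hz]
      set a := X (-(j : ℤ) - 1) ω with ha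
      unfold updD eta
      by_cases hb : isBurger a = true
      · simp only [hb, if_true]
        push_cast
        omega
      · have hb' : isBurger a = false := by
          cases h : isBurger a
          · rfl
          · exact absurd h hb
        simp only [hb', hb]
        simp only [Bool.false_eq_true, if_false]
        push_cast
        omega
    rcases Nat.lt_or_ge m (j+1) with hlt | hge
    · exact le_trans (ih m (by omega)) hstep
    · have : m = j + 1 := by omega
      subst this
      have : (0 : ℤ) ≤ (Drel X 0 0 (j+1) ω : ℤ) := by positivity
      omega

lemma U_le_Lcnt (j : ℕ) : Uw X ω j ≤ (Lcnt X 0 0 j ω : ℤ) := by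
  have h1 := Lcnt_sub_Drel (X := X) (ω := ω) j
  have h2 : (0 : ℤ) ≤ (Drel X 0 0 j ω : ℤ) := by positivity
  omega

lemma Lcnt_mono : ∀ (t n d : ℕ), Lcnt X n d t ω ≤ Lcnt X n d (t+1) ω := by
  intro t n d
  rw [Lcnt_succ_right t n d]
  omega

lemma Lcnt_mono' {j n' : ℕ} (h : j ≤ n') : Lcnt X 0 0 j ω ≤ Lcnt X 0 0 n' ω := by
  induction n' with
  | zero =>
    have : j = 0 := by omega
    subst this
    exact le_refl _
  | succ n' ih =>
    rcases Nat.lt_or_ge j (n'+1) with hlt | hge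
    · exact le_trans (ih (by omega)) (Lcnt_mono n' 0 0)
    · have : j = n' + 1 := by omega
      subst this
      exact le_refl _

/-! ### Probability estimates -/

section Prob

variable {Ω : Type*} [MeasurableSpace Ω] (μ : Measure Ω) [IsProbabilityMeasure μ]
  (p q : ℝ) (X : ℤ → Ω → BSym)

lemma measBSym (s : Set BSym) : MeasurableSet s := MeasurableSpace.measurableSet_top

lemma meas_preimage_insert (hmeas : ∀ i, Measurable (X i)) (i : ℤ) (a : BSym) (s : Set BSym)
    (ha : a ∉ s) :
    μ (X i ⁻¹' insert a s) = μ (X i ⁻¹' {a}) + μ (X i ⁻¹' s) := by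
  rw [Set.insert_eq, Set.preimage_union]
  exact measure_union ((Set.disjoint_singleton_left.2 ha).preimage _)
    ((hmeas i) (measBSym _))

lemma burgerSet_eq : {a : BSym | isBurger a = true} =
    insert BSym.hb (insert BSym.cb (insert BSym.db {BSym.eb})) := by
  ext a; cases a <;> simp [isBurger]

lemma orderSet_eq : {a : BSym | isBurger a = false} =
    insert BSym.ho (insert BSym.co (insert BSym.so {BSym.fo})) := by
  ext a; cases a <;> simp [isBurger]

lemma meas_burger (hmeas : ∀ i, Measurable (X i)) (hlaw : ∀ i, lawPQ p q μ (X i))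
    (hq0 : 0 ≤ q) (hq1 : q ≤ 1) (i : ℤ) :
    μ (X i ⁻¹' {a | isBurger a = true}) = ENNReal.ofReal (1/2) := by
  obtain ⟨_, _, _, h4, h5, h6, _, h8⟩ := hlaw i
  rw [burgerSet_eq]
  rw [meas_preimage_insert μ X hmeas i _ _ (by simp),
    meas_preimage_insert μ X hmeas i _ _ (by simp),
    meas_preimage_insert μ X hmeas i _ _ (by simp)]
  rw [h4, h5, h6, h8]
  rw [add_zero, ← ENNReal.ofReal_add (by linarith) (by linarith),
    ← ENNReal.ofReal_add (by linarith) (by linarith)]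
  congr 1
  ring

lemma meas_order (hmeas : ∀ i, Measurable (X i)) (hlaw : ∀ i, lawPQ p q μ (X i))
    (hp0 : 0 ≤ p) (hp1 : p ≤ 1) (i : ℤ) :
    μ (X i ⁻¹' {a | isBurger a = false}) = ENNReal.ofReal (1/2) := by
  obtain ⟨h1, h2, h3, _, _, _, h7, _⟩ := hlaw i
  rw [orderSet_eq]
  rw [meas_preimage_insert μ X hmeas i _ _ (by simp),
    meas_preimage_insert μ X hmeas i _ _ (by simp),
    meas_preimage_insert μ X hmeas i _ _ (by simp)]
  rw [h1, h2, h3, h7]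
  rw [add_zero, ← ENNReal.ofReal_add (by linarith) (by linarith),
    ← ENNReal.ofReal_add (by linarith) (by linarith)]
  congr 1
  ring

lemma meas_dbeb (hmeas : ∀ i, Measurable (X i)) (hlaw : ∀ i, lawPQ p q μ (X i))
    (hq0 : 0 ≤ q) (i : ℤ) :
    μ (X i ⁻¹' {BSym.db, BSym.eb}) = ENNReal.ofReal (q/2) := by
  obtain ⟨_, _, _, _, _, h6, _, h8⟩ := hlaw i
  rw [show ({BSym.db, BSym.eb} : Set BSym) = insert BSym.db {BSym.eb} from rfl]
  rw [meas_preimage_insert μ X hmeas i _ _ (by simp)]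
  rw [h6, h8, add_zero]

lemma prod_formula (hiid : iIndepFun X μ)
    (F : Finset ℤ) (A : ℤ → Set BSym) :
    μ (⋂ i ∈ F, X i ⁻¹' A i) = ∏ i ∈ F, μ (X i ⁻¹' A i) :=
  hiid.measure_inter_preimage_eq_mul F (fun _ _ => MeasurableSpace.measurableSet_top)

lemma insert_inter_eq (c : ℤ) (S : Set BSym) (F : Finset ℤ) (A : ℤ → Set BSym) (hc : c ∉ F) :
    (⋂ i ∈ F, X i ⁻¹' A i) ∩ X c ⁻¹' S =
      ⋂ i ∈ insert c F, X i ⁻¹' (Function.update A c S) i := by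
  rw [Finset.set_biInter_insert]
  rw [Function.update_self]
  rw [Set.inter_comm]
  congr 1
  apply Set.iInter₂_congr
  intro i hi
  rw [Function.update_of_ne (by rintro rfl; exact hc hi)]

lemma walk_bound (hmeas : ∀ i, Measurable (X i))
    (hiid : iIndepFun X μ)
    (hlaw : ∀ i, lawPQ p q μ (X i)) (hp0 : 0 ≤ p) (hp1 : p ≤ 1) (hq0 : 0 ≤ q) (hq1 : q ≤ 1) :
    ∀ (m n : ℕ) (K : ℤ) (F : Finset ℤ) (A : ℤ → Set BSym),
    (∀ i ∈ F, -(n : ℤ) ≤ i ∧ i ≤ -1) →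
    μ ((⋂ i ∈ F, X i ⁻¹' A i) ∩
        {ω | ∀ t : ℕ, 1 ≤ t → t ≤ m → Uw X ω (n+t) - Uw X ω n ≤ K}) ≤
      (∏ i ∈ F, μ (X i ⁻¹' A i)) * ENNReal.ofReal (cAux m K) := by
  intro m
  induction m with
  | zero =>
    intro n K F A hF
    rw [cAux_zero, ENNReal.ofReal_one, mul_one]
    calc μ ((⋂ i ∈ F, X i ⁻¹' A i) ∩ _) ≤ μ (⋂ i ∈ F, X i ⁻¹' A i) :=
          measure_mono Set.inter_subset_left
      _ = ∏ i ∈ F, μ (X i ⁻¹' A i) := prod_formula μ X hiid F A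
  | succ m ih =>
    intro n K F A hF
    have hcF : (-(n : ℤ) - 1) ∉ F := by
      intro hmem
      have := (hF _ hmem).1
      omega
    set c : ℤ := -(n : ℤ) - 1 with hc
    have hUsucc : ∀ ω, Uw X ω (n+1) = eta (X c ω) + Uw X ω n := fun ω => Uw_succ X ω n
    -- the two pieces
    set Tb : Set Ω :=
      {ω | ∀ t : ℕ, 1 ≤ t → t ≤ m → Uw X ω ((n+1)+t) - Uw X ω (n+1) ≤ K - 1} with hTb
    set To : Set Ω :=
      {ω | ∀ t : ℕ, 1 ≤ t → t ≤ m → Uw X ω ((n+1)+t) - Uw X ω (n+1) ≤ K + 1} with hTo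
    have hsubB : ∀ ω ∈ {ω | ∀ t : ℕ, 1 ≤ t → t ≤ m+1 → Uw X ω (n+t) - Uw X ω n ≤ K},
        isBurger (X c ω) = true → (1 ≤ K ∧ ω ∈ Tb) := by
      intro ω hω hb
      have he : eta (X c ω) = 1 := by unfold eta; rw [hb]; simp
      have h1 : Uw X ω (n+1) - Uw X ω n ≤ K := hω 1 (by omega) (by omega)
      rw [hUsucc ω, he] at h1
      constructor
      · omega
      · intro t h1t h2t
        have := hω (t+1) (by omega) (by omega)
        have hidx : n + (t+1) = (n+1) + t := by omega
        rw [hidx] at this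
        rw [hUsucc ω, he]
        omega
    have hsubO : ∀ ω ∈ {ω | ∀ t : ℕ, 1 ≤ t → t ≤ m+1 → Uw X ω (n+t) - Uw X ω n ≤ K},
        isBurger (X c ω) = false → ω ∈ To := by
      intro ω hω hb
      have he : eta (X c ω) = -1 := by unfold eta; rw [hb]; simp
      intro t h1t h2t
      have := hω (t+1) (by omega) (by omega)
      have hidx : n + (t+1) = (n+1) + t := by omega
      rw [hidx] at this
      rw [hUsucc ω, he]
      omega
    have hF' : ∀ i ∈ insert c F, -((n+1 : ℕ) : ℤ) ≤ i ∧ i ≤ -1 := by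
      intro i hi
      rcases Finset.mem_insert.1 hi with rfl | hi
      · constructor <;> [push_cast; skip] <;> omega
      · have := hF i hi
        constructor
        · have : -((n+1 : ℕ) : ℤ) ≤ -(n : ℤ) := by push_cast; omega
          omega
        · exact (hF i hi).2
    -- bound for one piece
    have piece : ∀ (S : Set BSym) (K' : ℤ),
        μ ((⋂ i ∈ F, X i ⁻¹' A i) ∩ (X c ⁻¹' S ∩
            {ω | ∀ t : ℕ, 1 ≤ t → t ≤ m → Uw X ω ((n+1)+t) - Uw X ω (n+1) ≤ K'})) ≤
          (∏ i ∈ F, μ (X i ⁻¹' A i)) * (μ (X c ⁻¹' S) * ENNReal.ofReal (cAux m K')) := by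
      intro S K'
      have h1 : (⋂ i ∈ F, X i ⁻¹' A i) ∩ (X c ⁻¹' S ∩
            {ω | ∀ t : ℕ, 1 ≤ t → t ≤ m → Uw X ω ((n+1)+t) - Uw X ω (n+1) ≤ K'}) =
          ((⋂ i ∈ insert c F, X i ⁻¹' (Function.update A c S) i) ∩
            {ω | ∀ t : ℕ, 1 ≤ t → t ≤ m → Uw X ω ((n+1)+t) - Uw X ω (n+1) ≤ K'}) := by
        rw [← insert_inter_eq X c S F A hcF, Set.inter_assoc]
      rw [h1]
      have h2 := ih (n+1) K' (insert c F) (Function.update A c S) hF'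
      have h3 : ∏ i ∈ insert c F, μ (X i ⁻¹' (Function.update A c S) i) =
          μ (X c ⁻¹' S) * ∏ i ∈ F, μ (X i ⁻¹' A i) := by
        rw [Finset.prod_insert hcF, Function.update_self]
        congr 1
        apply Finset.prod_congr rfl
        intro i hi
        rw [Function.update_of_ne (by rintro rfl; exact hcF hi)]
      rw [h3] at h2
      calc μ _ ≤ μ (X c ⁻¹' S) * (∏ i ∈ F, μ (X i ⁻¹' A i)) * ENNReal.ofReal (cAux m K') := h2
        _ = (∏ i ∈ F, μ (X i ⁻¹' A i)) * (μ (X c ⁻¹' S) * ENNReal.ofReal (cAux m K')) := by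
            ring
    by_cases hK : 1 ≤ K
    · have hsub : (⋂ i ∈ F, X i ⁻¹' A i) ∩
          {ω | ∀ t : ℕ, 1 ≤ t → t ≤ m+1 → Uw X ω (n+t) - Uw X ω n ≤ K} ⊆
          ((⋂ i ∈ F, X i ⁻¹' A i) ∩ (X c ⁻¹' {a | isBurger a = true} ∩ Tb)) ∪
          ((⋂ i ∈ F, X i ⁻¹' A i) ∩ (X c ⁻¹' {a | isBurger a = false} ∩ To)) := by
        rintro ω ⟨hωF, hωT⟩
        cases hb : isBurger (X c ω)
        · exact Or.inr ⟨hωF, hb, hsubO ω hωT hb⟩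
        · exact Or.inl ⟨hωF, hb, (hsubB ω hωT hb).2⟩
      calc μ _ ≤ μ (((⋂ i ∈ F, X i ⁻¹' A i) ∩ (X c ⁻¹' {a | isBurger a = true} ∩ Tb)) ∪
            ((⋂ i ∈ F, X i ⁻¹' A i) ∩ (X c ⁻¹' {a | isBurger a = false} ∩ To))) :=
            measure_mono hsub
        _ ≤ μ ((⋂ i ∈ F, X i ⁻¹' A i) ∩ (X c ⁻¹' {a | isBurger a = true} ∩ Tb)) +
            μ ((⋂ i ∈ F, X i ⁻¹' A i) ∩ (X c ⁻¹' {a | isBurger a = false} ∩ To)) :=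
            measure_union_le _ _
        _ ≤ (∏ i ∈ F, μ (X i ⁻¹' A i)) *
              (μ (X c ⁻¹' {a | isBurger a = true}) * ENNReal.ofReal (cAux m (K-1))) +
            (∏ i ∈ F, μ (X i ⁻¹' A i)) *
              (μ (X c ⁻¹' {a | isBurger a = false}) * ENNReal.ofReal (cAux m (K+1))) := by
            gcongr ?_ + ?_
            · exact piece {a | isBurger a = true} (K-1)
            · exact piece {a | isBurger a = false} (K+1)
        _ = (∏ i ∈ F, μ (X i ⁻¹' A i)) * ENNReal.ofReal (cAux (m+1) K) := by
            rw [← mul_add]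
            congr 1
            rw [meas_burger μ p q X hmeas hlaw hq0 hq1 c,
              meas_order μ p q X hmeas hlaw hp0 hp1 c]
            rw [← ENNReal.ofReal_mul (by norm_num), ← ENNReal.ofReal_mul (by norm_num),
              ← ENNReal.ofReal_add (mul_nonneg (by norm_num) (cAux_nonneg m (K-1)))
                (mul_nonneg (by norm_num) (cAux_nonneg m (K+1)))]
            congr 1
            rw [cAux_succ, if_pos hK]
            have h1 := cAux_nonneg m (K-1)
            have h2 := cAux_nonneg m (K+1)
            ring
    · have hsub : (⋂ i ∈ F, X i ⁻¹' A i) ∩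
          {ω | ∀ t : ℕ, 1 ≤ t → t ≤ m+1 → Uw X ω (n+t) - Uw X ω n ≤ K} ⊆
          (⋂ i ∈ F, X i ⁻¹' A i) ∩ (X c ⁻¹' {a | isBurger a = false} ∩ To) := by
        rintro ω ⟨hωF, hωT⟩
        cases hb : isBurger (X c ω)
        · exact ⟨hωF, hb, hsubO ω hωT hb⟩
        · exact absurd (hsubB ω hωT hb).1 hK
      calc μ _ ≤ μ ((⋂ i ∈ F, X i ⁻¹' A i) ∩ (X c ⁻¹' {a | isBurger a = false} ∩ To)) :=
            measure_mono hsub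
        _ ≤ (∏ i ∈ F, μ (X i ⁻¹' A i)) *
              (μ (X c ⁻¹' {a | isBurger a = false}) * ENNReal.ofReal (cAux m (K+1))) :=
            piece {a | isBurger a = false} (K+1)
        _ = (∏ i ∈ F, μ (X i ⁻¹' A i)) * ENNReal.ofReal (cAux (m+1) K) := by
            congr 1
            rw [meas_order μ p q X hmeas hlaw hp0 hp1 c]
            rw [← ENNReal.ofReal_mul (by norm_num)]
            congr 1
            rw [cAux_succ, if_neg hK]
            ring

lemma ladder_bound (hmeas : ∀ i, Measurable (X i))
    (hiid : iIndepFun X μ)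
    (hlaw : ∀ i, lawPQ p q μ (X i)) (hp0 : 0 ≤ p) (hp1 : p ≤ 1) (hq0 : 0 ≤ q) (hq1 : q ≤ 1) :
    ∀ (m n d N : ℕ) (F : Finset ℤ) (A : ℤ → Set BSym),
    (∀ i ∈ F, -(n : ℤ) ≤ i ∧ i ≤ -1) →
    μ ((⋂ i ∈ F, X i ⁻¹' A i) ∩ {ω | NoGood X n d m ω ∧ N ≤ Lcnt X n d m ω}) ≤
      (∏ i ∈ F, μ (X i ⁻¹' A i)) * ENNReal.ofReal q ^ N := by
  intro m
  induction m with
  | zero =>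
    intro n d N F A hF
    rcases Nat.eq_zero_or_pos N with rfl | hN
    · rw [pow_zero, mul_one]
      calc μ _ ≤ μ (⋂ i ∈ F, X i ⁻¹' A i) := measure_mono Set.inter_subset_left
        _ = ∏ i ∈ F, μ (X i ⁻¹' A i) := prod_formula μ X hiid F A
    · have hempty : {ω | NoGood X n d 0 ω ∧ N ≤ Lcnt X n d 0 ω} = (∅ : Set Ω) := by
        ext ω
        simp only [Set.mem_setOf_eq, Set.mem_empty_iff_false, iff_false, not_and, not_le]
        intro _
        show Lcnt X n d 0 ω < N
        have : Lcnt X n d 0 ω = 0 := rfl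
        omega
      rw [hempty, Set.inter_empty]
      simp
  | succ m ih =>
    intro n d N F A hF
    rcases Nat.eq_zero_or_pos N with rfl | hN
    · rw [pow_zero, mul_one]
      calc μ _ ≤ μ (⋂ i ∈ F, X i ⁻¹' A i) := measure_mono Set.inter_subset_left
        _ = ∏ i ∈ F, μ (X i ⁻¹' A i) := prod_formula μ X hiid F A
    obtain ⟨N', rfl⟩ : ∃ N', N = N' + 1 := ⟨N - 1, by omega⟩
    have hcF : (-(n : ℤ) - 1) ∉ F := by
      intro hmem
      have := (hF _ hmem).1
      omega
    set c : ℤ := -(n : ℤ) - 1 with hc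
    have hF' : ∀ i ∈ insert c F, -((n+1 : ℕ) : ℤ) ≤ i ∧ i ≤ -1 := by
      intro i hi
      rcases Finset.mem_insert.1 hi with rfl | hi
      · constructor <;> [push_cast; skip] <;> omega
      · have h1 := hF i hi
        constructor
        · have : -((n+1 : ℕ) : ℤ) ≤ -(n : ℤ) := by push_cast; omega
          omega
        · exact h1.2
    have piece : ∀ (S : Set BSym) (d' N'' : ℕ),
        μ ((⋂ i ∈ F, X i ⁻¹' A i) ∩ (X c ⁻¹' S ∩
            {ω | NoGood X (n+1) d' m ω ∧ N'' ≤ Lcnt X (n+1) d' m ω})) ≤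
          (∏ i ∈ F, μ (X i ⁻¹' A i)) * (μ (X c ⁻¹' S) * ENNReal.ofReal q ^ N'') := by
      intro S d' N''
      have h1 : (⋂ i ∈ F, X i ⁻¹' A i) ∩ (X c ⁻¹' S ∩
            {ω | NoGood X (n+1) d' m ω ∧ N'' ≤ Lcnt X (n+1) d' m ω}) =
          ((⋂ i ∈ insert c F, X i ⁻¹' (Function.update A c S) i) ∩
            {ω | NoGood X (n+1) d' m ω ∧ N'' ≤ Lcnt X (n+1) d' m ω}) := by
        rw [← insert_inter_eq X c S F A hcF, Set.inter_assoc]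
      rw [h1]
      have h2 := ih (n+1) d' N'' (insert c F) (Function.update A c S) hF'
      have h3 : ∏ i ∈ insert c F, μ (X i ⁻¹' (Function.update A c S) i) =
          μ (X c ⁻¹' S) * ∏ i ∈ F, μ (X i ⁻¹' A i) := by
        rw [Finset.prod_insert hcF, Function.update_self]
        congr 1
        apply Finset.prod_congr rfl
        intro i hi
        rw [Function.update_of_ne (by rintro rfl; exact hcF hi)]
      rw [h3] at h2
      calc μ _ ≤ μ (X c ⁻¹' S) * (∏ i ∈ F, μ (X i ⁻¹' A i)) * ENNReal.ofReal q ^ N'' := h2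
        _ = (∏ i ∈ F, μ (X i ⁻¹' A i)) * (μ (X c ⁻¹' S) * ENNReal.ofReal q ^ N'') := by ring
    have hNGdef : ∀ ω : Ω, NoGood X n d (m+1) ω ↔
        ((isBurger (X c ω) = true ∧ d = 0 → X c ω = BSym.db ∨ X c ω = BSym.eb) ∧
          NoGood X (n+1) (updD d (X c ω)) m ω) := fun ω => Iff.rfl
    have hLdef : ∀ ω : Ω, Lcnt X n d (m+1) ω =
        (if isBurger (X c ω) = true ∧ d = 0 then 1 else 0) +
          Lcnt X (n+1) (updD d (X c ω)) m ω := fun ω => rfl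
    by_cases hd : d = 0
    · subst hd
      have hsub : (⋂ i ∈ F, X i ⁻¹' A i) ∩
          {ω | NoGood X n 0 (m+1) ω ∧ N' + 1 ≤ Lcnt X n 0 (m+1) ω} ⊆
          ((⋂ i ∈ F, X i ⁻¹' A i) ∩ (X c ⁻¹' {BSym.db, BSym.eb} ∩
            {ω | NoGood X (n+1) 0 m ω ∧ N' ≤ Lcnt X (n+1) 0 m ω})) ∪
          ((⋂ i ∈ F, X i ⁻¹' A i) ∩ (X c ⁻¹' {a | isBurger a = false} ∩
            {ω | NoGood X (n+1) 1 m ω ∧ N' + 1 ≤ Lcnt X (n+1) 1 m ω})) := by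
        rintro ω ⟨hωF, hωE⟩
        rw [Set.mem_setOf_eq, hNGdef ω, hLdef ω] at hωE
        obtain ⟨⟨hcond, hNG⟩, hL⟩ := hωE
        cases hb : isBurger (X c ω)
        · right
          refine ⟨hωF, hb, ?_, ?_⟩
          · have : updD 0 (X c ω) = 1 := by unfold updD; rw [hb]; simp
            rwa [this] at hNG
          · have hi : (if isBurger (X c ω) = true ∧ (0:ℕ) = 0 then 1 else 0) = 0 := by
              rw [hb]; simp
            have : updD 0 (X c ω) = 1 := by unfold updD; rw [hb]; simp
            rw [hi, this] at hL
            omega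
        · left
          refine ⟨hωF, hcond ⟨hb, rfl⟩, ?_, ?_⟩
          · have : updD 0 (X c ω) = 0 := by unfold updD; rw [hb]; simp
            rwa [this] at hNG
          · have hi : (if isBurger (X c ω) = true ∧ (0:ℕ) = 0 then 1 else 0) = 1 := by
              rw [hb]; simp
            have : updD 0 (X c ω) = 0 := by unfold updD; rw [hb]; simp
            rw [hi, this] at hL
            omega
      calc μ _ ≤ μ (((⋂ i ∈ F, X i ⁻¹' A i) ∩ (X c ⁻¹' {BSym.db, BSym.eb} ∩
              {ω | NoGood X (n+1) 0 m ω ∧ N' ≤ Lcnt X (n+1) 0 m ω})) ∪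
            ((⋂ i ∈ F, X i ⁻¹' A i) ∩ (X c ⁻¹' {a | isBurger a = false} ∩
              {ω | NoGood X (n+1) 1 m ω ∧ N' + 1 ≤ Lcnt X (n+1) 1 m ω}))) :=
            measure_mono hsub
        _ ≤ _ + _ := measure_union_le _ _
        _ ≤ (∏ i ∈ F, μ (X i ⁻¹' A i)) *
              (μ (X c ⁻¹' {BSym.db, BSym.eb}) * ENNReal.ofReal q ^ N') +
            (∏ i ∈ F, μ (X i ⁻¹' A i)) *
              (μ (X c ⁻¹' {a | isBurger a = false}) * ENNReal.ofReal q ^ (N'+1)) := by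
            gcongr ?_ + ?_
            · exact piece {BSym.db, BSym.eb} 0 N'
            · exact piece {a | isBurger a = false} 1 (N'+1)
        _ = (∏ i ∈ F, μ (X i ⁻¹' A i)) * ENNReal.ofReal q ^ (N'+1) := by
            rw [← mul_add]
            congr 1
            rw [meas_dbeb μ p q X hmeas hlaw hq0 c, meas_order μ p q X hmeas hlaw hp0 hp1 c]
            have hq2 : ENNReal.ofReal (q/2) = ENNReal.ofReal (1/2) * ENNReal.ofReal q := by
              rw [← ENNReal.ofReal_mul (by norm_num)]
              congr 1
              ring
            rw [hq2, mul_assoc, ← pow_succ']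
            rw [← add_mul, ← ENNReal.ofReal_add (by norm_num) (by norm_num)]
            norm_num
    · have hsub : (⋂ i ∈ F, X i ⁻¹' A i) ∩
          {ω | NoGood X n d (m+1) ω ∧ N' + 1 ≤ Lcnt X n d (m+1) ω} ⊆
          ((⋂ i ∈ F, X i ⁻¹' A i) ∩ (X c ⁻¹' {a | isBurger a = true} ∩
            {ω | NoGood X (n+1) (d-1) m ω ∧ N' + 1 ≤ Lcnt X (n+1) (d-1) m ω})) ∪
          ((⋂ i ∈ F, X i ⁻¹' A i) ∩ (X c ⁻¹' {a | isBurger a = false} ∩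
            {ω | NoGood X (n+1) (d+1) m ω ∧ N' + 1 ≤ Lcnt X (n+1) (d+1) m ω})) := by
        rintro ω ⟨hωF, hωE⟩
        rw [Set.mem_setOf_eq, hNGdef ω, hLdef ω] at hωE
        obtain ⟨⟨hcond, hNG⟩, hL⟩ := hωE
        have hi : (if isBurger (X c ω) = true ∧ d = 0 then 1 else 0) = 0 := by
          simp [hd]
        rw [hi] at hL
        cases hb : isBurger (X c ω)
        · right
          have hupd : updD d (X c ω) = d + 1 := by unfold updD; rw [hb]; simp
          rw [hupd] at hNG hL
          exact ⟨hωF, hb, hNG, by omega⟩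
        · left
          have hupd : updD d (X c ω) = d - 1 := by unfold updD; rw [hb]; simp
          rw [hupd] at hNG hL
          exact ⟨hωF, hb, hNG, by omega⟩
      calc μ _ ≤ μ (((⋂ i ∈ F, X i ⁻¹' A i) ∩ (X c ⁻¹' {a | isBurger a = true} ∩
              {ω | NoGood X (n+1) (d-1) m ω ∧ N' + 1 ≤ Lcnt X (n+1) (d-1) m ω})) ∪
            ((⋂ i ∈ F, X i ⁻¹' A i) ∩ (X c ⁻¹' {a | isBurger a = false} ∩
              {ω | NoGood X (n+1) (d+1) m ω ∧ N' + 1 ≤ Lcnt X (n+1) (d+1) m ω}))) :=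
            measure_mono hsub
        _ ≤ _ + _ := measure_union_le _ _
        _ ≤ (∏ i ∈ F, μ (X i ⁻¹' A i)) *
              (μ (X c ⁻¹' {a | isBurger a = true}) * ENNReal.ofReal q ^ (N'+1)) +
            (∏ i ∈ F, μ (X i ⁻¹' A i)) *
              (μ (X c ⁻¹' {a | isBurger a = false}) * ENNReal.ofReal q ^ (N'+1)) := by
            gcongr ?_ + ?_
            · exact piece {a | isBurger a = true} (d-1) (N'+1)
            · exact piece {a | isBurger a = false} (d+1) (N'+1)
        _ = (∏ i ∈ F, μ (X i ⁻¹' A i)) * ENNReal.ofReal q ^ (N'+1) := by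
            rw [← mul_add]
            congr 1
            rw [meas_burger μ p q X hmeas hlaw hq0 hq1 c,
              meas_order μ p q X hmeas hlaw hp0 hp1 c]
            rw [← add_mul, ← ENNReal.ofReal_add (by norm_num) (by norm_num)]
            norm_num

lemma sup_event_null (hmeas : ∀ i, Measurable (X i))
    (hiid : iIndepFun X μ)
    (hlaw : ∀ i, lawPQ p q μ (X i)) (hp0 : 0 ≤ p) (hp1 : p ≤ 1) (hq0 : 0 ≤ q) (hq1 : q ≤ 1)
    (K : ℤ) (hK : 0 ≤ K) :
    μ {ω | ∀ j : ℕ, 1 ≤ j → Uw X ω j ≤ K} = 0 := by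
  have hb : ∀ m : ℕ, μ {ω | ∀ j : ℕ, 1 ≤ j → Uw X ω j ≤ K} ≤ ENNReal.ofReal (cAux m K) := by
    intro m
    have hsub : {ω | ∀ j : ℕ, 1 ≤ j → Uw X ω j ≤ K} ⊆
        {ω | ∀ t : ℕ, 1 ≤ t → t ≤ m → Uw X ω (0+t) - Uw X ω 0 ≤ K} := by
      intro ω hω t h1 _
      have := hω t h1
      rw [Uw_zero]
      simpa using this
    have hwb := walk_bound μ p q X hmeas hiid hlaw hp0 hp1 hq0 hq1 m 0 K ∅
      (fun _ => Set.univ) (by simp)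
    simp only [Finset.notMem_empty, Set.iInter_of_empty, Set.iInter_univ,
      Set.univ_inter, Finset.prod_empty, one_mul] at hwb
    exact le_trans (measure_mono hsub) hwb
  have htend : Filter.Tendsto (fun m => ENNReal.ofReal (cAux m K)) Filter.atTop (nhds 0) := by
    have := ENNReal.tendsto_ofReal (cAux_tendsto_zero hK)
    simpa using this
  have := ge_of_tendsto' htend hb
  simpa using this

lemma Cc_null (hmeas : ∀ i, Measurable (X i))
    (hiid : iIndepFun X μ)
    (hlaw : ∀ i, lawPQ p q μ (X i)) (hp0 : 0 ≤ p) (hp1 : p ≤ 1) (hq0 : 0 ≤ q) (hq1 : q < 1) :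
    μ {ω | ¬ ∃ j : ℕ, (X (-(j : ℤ) - 1) ω = BSym.hb ∨ X (-(j : ℤ) - 1) ω = BSym.cb) ∧
        Drel X 0 0 j ω = 0} = 0 := by
  set C : Set Ω := {ω | ∃ j : ℕ, (X (-(j : ℤ) - 1) ω = BSym.hb ∨ X (-(j : ℤ) - 1) ω = BSym.cb) ∧
      Drel X 0 0 j ω = 0} with hC
  -- on the complement, NoGood holds for all n
  have hNG : ∀ ω, ω ∉ C → ∀ n : ℕ, NoGood X 0 0 n ω := by
    intro ω hω n
    induction n with
    | zero => trivial
    | succ n ihn =>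
      rw [NoGood_succ_right n 0 0]
      refine ⟨ihn, ?_⟩
      rintro ⟨hb, hD⟩
      by_contra hcon
      push_neg at hcon
      apply hω
      have hz : ((0 + n : ℕ) : ℤ) = (n : ℤ) := by push_cast; ring
      rw [hz] at hb hcon
      refine ⟨n, ?_, ?_⟩
      · rcases hcb : X (-(n : ℤ) - 1) ω with _ | _ | _ | _ | _ | _ | _ | _ <;>
          rw [hcb] at hb hcon <;> simp [isBurger] at hb hcon ⊢
      · exact hD
  have key : ∀ N : ℕ, μ Cᶜ ≤ ENNReal.ofReal q ^ N := by
    intro N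
    have hstep : ∀ n : ℕ, μ Cᶜ ≤ ENNReal.ofReal q ^ N + ENNReal.ofReal (cAux n ((N : ℤ) - 1)) := by
      intro n
      have hsplit : (Cᶜ : Set Ω) ⊆
          {ω | NoGood X 0 0 n ω ∧ N ≤ Lcnt X 0 0 n ω} ∪
          {ω | ∀ t : ℕ, 1 ≤ t → t ≤ n → Uw X ω (0+t) - Uw X ω 0 ≤ (N : ℤ) - 1} := by
        intro ω hω
        by_cases hcnt : N ≤ Lcnt X 0 0 n ω
        · exact Or.inl ⟨hNG ω hω n, hcnt⟩
        · right
          intro t h1 h2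
          have hU := U_le_Lcnt (X := X) (ω := ω) t
          have hmono := Lcnt_mono' (X := X) (ω := ω) h2
          rw [Uw_zero]
          simp only [Nat.zero_add]
          omega
      have hlb := ladder_bound μ p q X hmeas hiid hlaw hp0 hp1 hq0 (le_of_lt hq1) n 0 0 N ∅
        (fun _ => Set.univ) (by simp)
      simp only [Finset.notMem_empty, Set.iInter_of_empty, Set.iInter_univ,
        Set.univ_inter, Finset.prod_empty, one_mul] at hlb
      have hwb := walk_bound μ p q X hmeas hiid hlaw hp0 hp1 hq0 (le_of_lt hq1) n 0
        ((N : ℤ) - 1) ∅ (fun _ => Set.univ) (by simp)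
      simp only [Finset.notMem_empty, Set.iInter_of_empty, Set.iInter_univ,
        Set.univ_inter, Finset.prod_empty, one_mul] at hwb
      calc μ Cᶜ ≤ μ ({ω | NoGood X 0 0 n ω ∧ N ≤ Lcnt X 0 0 n ω} ∪
            {ω | ∀ t : ℕ, 1 ≤ t → t ≤ n → Uw X ω (0+t) - Uw X ω 0 ≤ (N : ℤ) - 1}) :=
            measure_mono hsplit
        _ ≤ μ {ω | NoGood X 0 0 n ω ∧ N ≤ Lcnt X 0 0 n ω} +
            μ {ω | ∀ t : ℕ, 1 ≤ t → t ≤ n → Uw X ω (0+t) - Uw X ω 0 ≤ (N : ℤ) - 1} :=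
            measure_union_le _ _
        _ ≤ ENNReal.ofReal q ^ N + ENNReal.ofReal (cAux n ((N : ℤ) - 1)) :=
            add_le_add hlb hwb
    rcases Nat.eq_zero_or_pos N with rfl | hNpos
    · rw [pow_zero]
      calc μ Cᶜ ≤ μ Set.univ := measure_mono (Set.subset_univ _)
        _ = 1 := measure_univ
    · have htend : Filter.Tendsto
          (fun n => ENNReal.ofReal q ^ N + ENNReal.ofReal (cAux n ((N : ℤ) - 1)))
          Filter.atTop (nhds (ENNReal.ofReal q ^ N + 0)) := by
        apply Filter.Tendsto.add tendsto_const_nhds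
        have := ENNReal.tendsto_ofReal (cAux_tendsto_zero (K := (N : ℤ) - 1) (by omega))
        simpa using this
      rw [add_zero] at htend
      exact ge_of_tendsto' htend hstep
  have htendN : Filter.Tendsto (fun N => ENNReal.ofReal q ^ N) Filter.atTop (nhds 0) :=
    ENNReal.tendsto_pow_atTop_nhds_zero_of_lt_one (by
      exact lt_of_lt_of_le (ENNReal.ofReal_lt_one.2 hq1) le_rfl)
  have hfin := ge_of_tendsto' htendN key
  have h0 : μ Cᶜ = 0 := by simpa using hfin
  have hcc : {ω | ¬ ∃ j : ℕ, (X (-(j : ℤ) - 1) ω = BSym.hb ∨ X (-(j : ℤ) - 1) ω = BSym.cb) ∧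
      Drel X 0 0 j ω = 0} = Cᶜ := by
    rw [hC]
    rfl
  rw [hcc]
  exact h0

lemma eb_null (hlaw : ∀ i, lawPQ p q μ (X i)) :
    μ {ω | ∃ i : ℤ, X i ω = BSym.eb} = 0 := by
  have hsub : {ω | ∃ i : ℤ, X i ω = BSym.eb} ⊆ ⋃ i : ℤ, X i ⁻¹' {BSym.eb} := by
    rintro ω ⟨i, hi⟩
    exact Set.mem_iUnion.2 ⟨i, hi⟩
  have h0 : μ (⋃ i : ℤ, X i ⁻¹' {BSym.eb}) = 0 := by
    apply measure_iUnion_null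
    intro i
    exact (hlaw i).2.2.2.2.2.2.2
  exact le_antisymm (le_trans (measure_mono hsub) (le_of_eq h0)) zero_le

end Prob

end JB

/-- Let `J` be the smallest `j ≥ 1` such that the reduced word `X(-j,-1)`
contains an `hb` or `cb`. Then almost surely: (i) `J` is finite; (ii) `X_{-J} ∈ {hb, cb}`;
(iii) the symbol `X_{-J}` has no match in `X_{-J} ⋯ X_{-1}` (its burger type survives in the
reduced word); and (iv) the reduced word `X(-J,-1)` consists only of `hb`'s and `co`'s if
`X_{-J} = hb`, and only of `cb`'s and `ho`'s if `X_{-J} = cb`. -/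
theorem J_basic {Ω : Type*} [MeasurableSpace Ω]
    (μ : Measure Ω) [IsProbabilityMeasure μ]
    (p q : ℝ) (hp0 : 0 ≤ p) (hp1 : p ≤ 1) (hq0 : 0 ≤ q) (hq1 : q < 1)
    (X : ℤ → Ω → BSym) (hmeas : ∀ i, Measurable (X i))
    (hiid : iIndepFun X μ)
    (hlaw : ∀ i, lawPQ p q μ (X i))
    (R : Word → Word) (hR : ∀ x : Word, Reduced (R x) ∧ WEquiv x (R x)) :
    ∀ᵐ ω ∂μ,
      {j : ℕ | 0 < j ∧ 0 < NHC (R (bword X ω j))}.Nonempty ∧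
      (X (-(Jt X R ω : ℤ)) ω = BSym.hb ∨ X (-(Jt X R ω : ℤ)) ω = BSym.cb) ∧
      0 < (R (bword X ω (Jt X R ω))).count (X (-(Jt X R ω : ℤ)) ω) ∧
      (X (-(Jt X R ω : ℤ)) ω = BSym.hb →
        ∀ a ∈ R (bword X ω (Jt X R ω)), a = BSym.hb ∨ a = BSym.co) ∧
      (X (-(Jt X R ω : ℤ)) ω = BSym.cb →
        ∀ a ∈ R (bword X ω (Jt X R ω)), a = BSym.cb ∨ a = BSym.ho) := by
  have hCnull := JB.Cc_null μ p q X hmeas hiid hlaw hp0 hp1 hq0 hq1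
  have hEbnull := JB.eb_null μ p q X hlaw
  have h1 : ∀ᵐ ω ∂μ, ∃ j : ℕ,
      (X (-(j : ℤ) - 1) ω = BSym.hb ∨ X (-(j : ℤ) - 1) ω = BSym.cb) ∧
        JB.Drel X 0 0 j ω = 0 := by
    rw [MeasureTheory.ae_iff]
    exact hCnull
  have h2 : ∀ᵐ ω ∂μ, ∀ i : ℤ, X i ω ≠ BSym.eb := by
    rw [MeasureTheory.ae_iff]
    have hset : {ω | ¬ ∀ i : ℤ, X i ω ≠ BSym.eb} = {ω | ∃ i : ℤ, X i ω = BSym.eb} := by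
      ext ω
      simp
    rw [hset]
    exact hEbnull
  filter_upwards [h1.and h2] with ω hω
  obtain ⟨⟨j, hx, hD⟩, heb⟩ := hω
  have hC' : ∃ j : ℕ, (X (-(j : ℤ) - 1) ω = BSym.hb ∨ X (-(j : ℤ) - 1) ω = BSym.cb) ∧
      ∀ m ≤ j, JB.Uw X ω m ≤ JB.Uw X ω j := by
    refine ⟨j, hx, fun m hm => ?_⟩
    have := JB.Drel_weak_ladder (X := X) (ω := ω) j m hm
    rw [hD] at this
    simpa using this
  exact JB.final_det X ω R hR hC' heb
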